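/- The mobile-ambient term a[in b] | b[in c] | c[in d] | d[in e] | e[in a] has five alternative steps forming a cyclic conflict structure of length five (each step moving one ambient into the next), satisfying all the conditions of the M* pattern except that all five conflicts are asymmetric. -/
import Mathlib


/- STATEMENT 13: a[in b] | b[in c] | c[in d] | d[in e] | e[in a] has five
alternative steps forming a cyclic conflict structure of length five (each step
moving one ambient into the next), satisfying all conditions of the M* pattern
except that all five conflicts are asymmetric: for each adjacent pair, the two
steps have no common completion (conflict), yet after the step moving x into y
the step moving y (now containing x) onwards is still possible (asymmetry);
non-adjacent steps are distributable. -/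
set_option autoImplicit true

/-- Syntax of mobile ambients (with the success constant ✓). -/
inductive MA : Type
  | nil : MA
  | succ : MA                 -- the success constant ✓
  | par : MA → MA → MA
  | res : Nat → MA → MA
  | repl : MA → MA
  | amb : Nat → MA → MA       -- ambient n[P]
  | inn : Nat → MA → MA       -- in n.P
  | out : Nat → MA → MA       -- out n.P
  | opn : Nat → MA → MA       -- open n.P
deriving DecidableEq

namespace MA

/-- Free names. -/
def fn : MA → Set Nat
  | nil => ∅
  | succ => ∅
  | par P Q => fn P ∪ fn Q
  | res n P => fn P \ {n}
  | repl P => fn P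
  | amb n P => insert n (fn P)
  | inn n P => insert n (fn P)
  | out n P => insert n (fn P)
  | opn n P => insert n (fn P)

/-- Structural congruence. -/
inductive SC : MA → MA → Prop
  | refl (P) : SC P P
  | symm : SC P Q → SC Q P
  | trans : SC P Q → SC Q R → SC P R
  | parNil (P) : SC (par P nil) P
  | parComm (P Q) : SC (par P Q) (par Q P)
  | parAssoc (P Q R) : SC (par (par P Q) R) (par P (par Q R))
  | replUnfold (P) : SC (repl P) (par P (repl P))
  | replNil : SC (repl nil) nil
  | resNil (n) : SC (res n nil) nil
  | resSwap (n m P) : SC (res n (res m P)) (res m (res n P))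
  | resPar (n P Q) : n ∉ fn P → SC (par P (res n Q)) (res n (par P Q))
  | resAmb (n m P) : n ≠ m → SC (res n (amb m P)) (amb m (res n P))
  | parCongr : SC P P' → SC Q Q' → SC (par P Q) (par P' Q')
  | resCongr (n) : SC P P' → SC (res n P) (res n P')
  | replCongr : SC P P' → SC (repl P) (repl P')
  | ambCongr (n) : SC P P' → SC (amb n P) (amb n P')
  | innCongr (n) : SC P P' → SC (inn n P) (inn n P')
  | outCongr (n) : SC P P' → SC (out n P) (out n P')
  | opnCongr (n) : SC P P' → SC (opn n P) (opn n P')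

/-- Reduction semantics of mobile ambients. -/
inductive Red : MA → MA → Prop
  | inStep (n m P Q R) :
      Red (par (amb n (par (inn m P) Q)) (amb m R)) (amb m (par (amb n (par P Q)) R))
  | outStep (n m P Q R) :
      Red (amb m (par (amb n (par (out m P) Q)) R)) (par (amb n (par P Q)) (amb m R))
  | openStep (n P Q) :
      Red (par (opn n P) (amb n Q)) (par P Q)
  | resCtx (n) : Red P P' → Red (res n P) (res n P')
  | ambCtx (n) : Red P P' → Red (amb n P) (amb n P')
  | parCtx : Red P P' → Red (par P Q) (par P' Q)
  | structCong : SC P Q → Red Q Q' → SC Q' P' → Red P P'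

def Steps : MA → MA → Prop := Relation.ReflTransGen Red

/-- Unguarded occurrence of ✓. -/
inductive HasSucc : MA → Prop
  | succ : HasSucc succ
  | parL : HasSucc P → HasSucc (par P Q)
  | parR : HasSucc Q → HasSucc (par P Q)
  | res (n) : HasSucc P → HasSucc (res n P)
  | repl : HasSucc P → HasSucc (repl P)
  | amb (n) : HasSucc P → HasSucc (amb n P)

def ReachSucc (P : MA) : Prop := ∃ Q, Steps P Q ∧ HasSucc Q

/-- `P` reaches success in every finite maximal execution. -/
def MustReachSucc (P : MA) : Prop :=
  ∀ (f : ℕ → MA) (k : ℕ), f 0 = P → (∀ i < k, Red (f i) (f (i + 1))) →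
    (∀ Q, ¬ Red (f k) Q) → ∃ i ≤ k, HasSucc (f i)

/-- Two alternative steps (given by their results) commute / can be completed
to a common term: the behavioural rendering of "parallel steps". -/
def ParallelSteps (X Y : MA) : Prop := ∃ Q, Red X Q ∧ Red Y Q

/-- Behavioural rendering of a (symmetric) conflict between two alternative
steps: neither can be completed after the other. -/
def InConflict (X Y : MA) : Prop := ¬ ParallelSteps X Y

/-- The two steps `P ⟶ X` and `P ⟶ Y` are distributable: they can be performed
by two separate parallel components of (a term structurally congruent to) `P`. -/
def DistributableSteps (P X Y : MA) : Prop :=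
  ∃ Q1 Q2 Q1' Q2', SC P (par Q1 Q2) ∧ Red Q1 Q1' ∧ Red Q2 Q2' ∧
    SC X (par Q1' Q2) ∧ SC Y (par Q1 Q2')

end MA

namespace MAAux
open MA

/-! ### Invariants -/

/-- `P` has a top-level (unguarded, not under an ambient) `in m` prefix. -/
def tinn (m : Nat) : MA → Prop
  | .par P Q => tinn m P ∨ tinn m Q
  | .res _ P => tinn m P
  | .repl P => tinn m P
  | .inn k _ => k = m
  | _ => False

/-- `P` has a top-level ambient named `m`. -/
def hta (m : Nat) : MA → Prop
  | .par P Q => hta m P ∨ hta m Q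
  | .res _ P => hta m P
  | .repl P => hta m P
  | .amb k _ => k = m
  | _ => False

/-- `P` has a top-level ambient whose body has a top-level `in m`. -/
def htia (m : Nat) : MA → Prop
  | .par P Q => htia m P ∨ htia m Q
  | .res _ P => htia m P
  | .repl P => htia m P
  | .amb _ P => tinn m P
  | _ => False

/-- Somewhere strictly inside an ambient of `P`, an `in m` redex is co-located. -/
def deep (m : Nat) : MA → Prop
  | .par P Q => deep m P ∨ deep m Q
  | .res _ P => deep m P
  | .repl P => deep m P
  | .amb _ P => (htia m P ∧ hta m P) ∨ deep m P
  | _ => False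

/-- Somewhere in `P` an `in m` redex is co-located (so an `in m` step is
conceivable). -/
def canIn (m : Nat) (P : MA) : Prop := (htia m P ∧ hta m P) ∨ deep m P

/-- `P` contains no `out` and no `open` prefixes. -/
def noOut : MA → Prop
  | .par P Q => noOut P ∧ noOut Q
  | .res _ P => noOut P
  | .repl P => noOut P
  | .amb _ P => noOut P
  | .inn _ P => noOut P
  | .out _ _ => False
  | .opn _ _ => False
  | _ => True

/-- Count (in `ℕ∞`) of occurrences of the capability `in m` in `P`. -/
def cntI (m : Nat) : MA → ℕ∞
  | .par P Q => cntI m P + cntI m Q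
  | .res _ P => cntI m P
  | .repl P => if cntI m P = 0 then 0 else ⊤
  | .amb _ P => cntI m P
  | .inn k P => (if k = m then 1 else 0) + cntI m P
  | .out _ P => cntI m P
  | .opn _ P => cntI m P
  | _ => 0

/-! ### SC invariance -/

theorem sc_tinn (m : Nat) (h : SC P Q) : tinn m P ↔ tinn m Q := by
  induction h <;> simp_all [tinn] <;> tauto

theorem sc_hta (m : Nat) (h : SC P Q) : hta m P ↔ hta m Q := by
  induction h <;> simp_all [hta] <;> tauto

theorem sc_htia (m : Nat) (h : SC P Q) : htia m P ↔ htia m Q := by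
  induction h with
  | ambCongr n h ih => exact (sc_tinn m h)
  | _ => simp_all [htia, tinn] <;> tauto

theorem sc_deep (m : Nat) (h : SC P Q) : deep m P ↔ deep m Q := by
  induction h with
  | ambCongr n h ih =>
      simp only [deep]
      rw [sc_htia m h, sc_hta m h, ih]
  | _ => simp_all [deep, htia, hta, tinn] <;> tauto

theorem sc_canIn (m : Nat) (h : SC P Q) : canIn m P ↔ canIn m Q := by
  unfold canIn; rw [sc_htia m h, sc_hta m h, sc_deep m h]

theorem sc_noOut (h : SC P Q) : noOut P ↔ noOut Q := by
  induction h <;> simp_all [noOut] <;> tauto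

theorem sc_cntI (m : Nat) (h : SC P Q) : cntI m P = cntI m Q := by
  induction h with
  | replUnfold P =>
      simp only [cntI]
      by_cases h : cntI m P = 0 <;> simp [h, add_top]
  | _ => simp_all [cntI] <;> try abel

end MAAux
namespace MAAux
open MA

/-! ### The key lemma about reduction -/

theorem red_key (h : Red P Q) (hno : noOut P) :
    ∃ m, canIn m P ∧ ∀ k, cntI k Q + (if m = k then 1 else 0) = cntI k P := by
  induction h with
  | inStep n m P Q R =>
      refine ⟨m, Or.inl ⟨Or.inl ?_, Or.inr rfl⟩, fun k => ?_⟩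
      · simp [htia, tinn]
      · simp only [cntI]; abel
  | outStep n m P Q R => simp [noOut] at hno
  | openStep n P Q => simp [noOut] at hno
  | resCtx n h ih =>
      obtain ⟨m, hc, he⟩ := ih hno
      exact ⟨m, hc, he⟩
  | ambCtx n h ih =>
      obtain ⟨m, hc, he⟩ := ih hno
      exact ⟨m, Or.inr (by simpa [deep, canIn] using hc), he⟩
  | parCtx h ih =>
      obtain ⟨m, hc, he⟩ := ih hno.1
      refine ⟨m, ?_, fun k => ?_⟩
      · rcases hc with ⟨h1, h2⟩ | h3
        · exact Or.inl ⟨Or.inl h1, Or.inl h2⟩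
        · exact Or.inr (Or.inl h3)
      · simp only [cntI]; rw [add_right_comm, he k]
  | structCong s1 hr s2 ih =>
      obtain ⟨m, hc, he⟩ := ih ((sc_noOut s1).mp hno)
      refine ⟨m, (sc_canIn m s1).mpr hc, fun k => ?_⟩
      rw [← sc_cntI k s2, sc_cntI k s1]
      exact he k

/-! ### Conflict criterion -/

theorem conflict_of (m : Nat) (X Y : MA) (hX : noOut X) (hY : noOut Y)
    (hX0 : cntI m X = 0) (hY1 : cntI m Y = 1) (hYc : ¬ canIn m Y) :
    InConflict X Y := by
  rintro ⟨Q, hq1, hq2⟩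
  obtain ⟨m1, _, e1⟩ := red_key hq1 hX
  obtain ⟨m2, c2, e2⟩ := red_key hq2 hY
  have h1 := e1 m; rw [hX0] at h1
  have hq0 : cntI m Q = 0 := (add_eq_zero.mp h1).1
  have h2 := e2 m
  rw [hq0, hY1, zero_add] at h2
  by_cases hm : m2 = m
  · exact hYc (hm ▸ c2)
  · simp [hm] at h2

end MAAux
namespace MAAux
open MA

/-! ### Permutation toolkit for SC -/

/-- Flatten a parallel composition into its list of atoms. -/
def toL : MA → List MA
  | .par P Q => toL P ++ toL Q
  | .nil => []
  | P => [P]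

/-- Rebuild a parallel composition from a list. -/
def ofL : List MA → MA
  | [] => .nil
  | P :: l => .par P (ofL l)

theorem sc_swap (P Q R : MA) : SC (.par P (.par Q R)) (.par Q (.par P R)) :=
  (SC.symm (SC.parAssoc P Q R)).trans
    (((SC.parComm P Q).parCongr (SC.refl R)).trans (SC.parAssoc Q P R))

theorem sc_ofL_append : ∀ l1 l2 : List MA, SC (.par (ofL l1) (ofL l2)) (ofL (l1 ++ l2))
  | [], l2 => (SC.parComm _ _).trans (SC.parNil _)
  | P :: l1, l2 =>
      (SC.parAssoc P (ofL l1) (ofL l2)).trans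
        ((SC.refl P).parCongr (sc_ofL_append l1 l2))

theorem sc_toL : ∀ P : MA, SC P (ofL (toL P))
  | .par P Q => ((sc_toL P).parCongr (sc_toL Q)).trans (sc_ofL_append (toL P) (toL Q))
  | .nil => SC.refl _
  | .succ => SC.symm (SC.parNil _)
  | .res n P => SC.symm (SC.parNil _)
  | .repl P => SC.symm (SC.parNil _)
  | .amb n P => SC.symm (SC.parNil _)
  | .inn n P => SC.symm (SC.parNil _)
  | .out n P => SC.symm (SC.parNil _)
  | .opn n P => SC.symm (SC.parNil _)

theorem sc_ofL_perm {l1 l2 : List MA} (h : l1.Perm l2) : SC (ofL l1) (ofL l2) := by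
  induction h with
  | nil => exact SC.refl _
  | cons x _ ih => exact (SC.refl x).parCongr ih
  | swap x y l => exact sc_swap y x (ofL l)
  | trans _ _ ih1 ih2 => exact ih1.trans ih2

/-- Workhorse: structural congruence from a permutation of parallel atoms. -/
theorem sc_perm (X Y : MA) (h : (toL X).Perm (toL Y)) : SC X Y :=
  (sc_toL X).trans ((sc_ofL_perm h).trans (SC.symm (sc_toL Y)))

theorem perm_block (l1 l2 l3 : List MA) :
    ((l1 ++ l2) ++ l3).Perm ((l2 ++ l1) ++ l3) :=
  (List.perm_append_comm).append_right l3

/-! ### Basic `in` steps -/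

/-- `n[in m] | m[R] ⟶ m[n[] | R]`. -/
theorem red_enter (n m : Nat) (R : MA) :
    Red (.par (.amb n (.inn m .nil)) (.amb m R)) (.amb m (.par (.amb n .nil) R)) :=
  Red.structCong
    ((SC.ambCongr n (SC.symm (SC.parNil _))).parCongr (SC.refl _))
    (Red.inStep n m .nil .nil R)
    (SC.ambCongr m ((SC.ambCongr n (SC.parNil _)).parCongr (SC.refl _)))

/-- `y[x[] | in z] | z[R] ⟶ z[y[x[]] | R]`. -/
theorem red_enter2 (x y z : Nat) (R : MA) :
    Red (.par (.amb y (.par (.amb x .nil) (.inn z .nil))) (.amb z R))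
      (.amb z (.par (.amb y (.amb x .nil)) R)) :=
  Red.structCong
    ((SC.ambCongr y (SC.parComm _ _)).parCongr (SC.refl _))
    (Red.inStep y z .nil (.amb x .nil) R)
    (SC.ambCongr z ((SC.ambCongr y ((SC.parComm _ _).trans (SC.parNil _))).parCongr
      (SC.refl _)))

end MAAux
namespace MAAux
open MA

/-- `x[in y]`. -/
def CA (x y : Nat) : MA := .amb x (.inn y .nil)
/-- `y[x[] | in z]`. -/
def B (x y z : Nat) : MA := .amb y (.par (.amb x .nil) (.inn z .nil))
/-- `z[y[x[]] | in w]`. -/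
def T (x y z w : Nat) : MA := .amb z (.par (.amb y (.amb x .nil)) (.inn w .nil))

/-- `x[in y] | (y[R] | Z) ⟶ y[x[]|R] | Z`. -/
theorem red_three (x y : Nat) (R Z : MA) :
    Red (.par (.amb x (.inn y .nil)) (.par (.amb y R) Z))
      (.par (.amb y (.par (.amb x .nil) R)) Z) :=
  Red.structCong (SC.symm (SC.parAssoc _ _ _)) (Red.parCtx (red_enter x y R))
    (SC.refl _)

end MAAux

open MA

theorem stmt13 (a b c d e : Nat) (hdist : [a, b, c, d, e].Nodup) :
    let Ca : MA := .amb a (.inn b .nil)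
    let Cb : MA := .amb b (.inn c .nil)
    let Cc : MA := .amb c (.inn d .nil)
    let Cd : MA := .amb d (.inn e .nil)
    let Ce : MA := .amb e (.inn a .nil)
    let A : MA := .par Ca (.par Cb (.par Cc (.par Cd Ce)))
    -- the five alternative steps: R1 moves a into b, R2 moves b into c, ...
    let R1 : MA := .par (.amb b (.par (.amb a .nil) (.inn c .nil))) (.par Cc (.par Cd Ce))
    let R2 : MA := .par Ca (.par (.amb c (.par (.amb b .nil) (.inn d .nil))) (.par Cd Ce))
    let R3 : MA := .par Ca (.par Cb (.par (.amb d (.par (.amb c .nil) (.inn e .nil))) Ce))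
    let R4 : MA := .par Ca (.par Cb (.par Cc (.amb e (.par (.amb d .nil) (.inn a .nil)))))
    let R5 : MA := .par (.amb a (.par (.amb e .nil) (.inn b .nil))) (.par Cb (.par Cc Cd))
    -- combined results witnessing the asymmetry of the adjacent conflicts
    let Q12 : MA := .par (.amb c (.par (.amb b (.amb a .nil)) (.inn d .nil))) (.par Cd Ce)
    let Q23 : MA := .par Ca (.par (.amb d (.par (.amb c (.amb b .nil)) (.inn e .nil))) Ce)
    let Q34 : MA := .par Ca (.par Cb (.amb e (.par (.amb d (.amb c .nil)) (.inn a .nil))))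
    let Q45 : MA := .par (.amb a (.par (.amb e (.amb d .nil)) (.inn b .nil))) (.par Cb Cc)
    let Q51 : MA := .par (.amb b (.par (.amb a (.amb e .nil)) (.inn c .nil))) (.par Cc Cd)
    -- the five alternative steps exist
    (Red A R1 ∧ Red A R2 ∧ Red A R3 ∧ Red A R4 ∧ Red A R5) ∧
    -- pairwise different results
    (R1 ≠ R2 ∧ R1 ≠ R3 ∧ R1 ≠ R4 ∧ R1 ≠ R5 ∧ R2 ≠ R3 ∧ R2 ≠ R4 ∧ R2 ≠ R5 ∧
      R3 ≠ R4 ∧ R3 ≠ R5 ∧ R4 ≠ R5) ∧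
    -- cyclically adjacent steps are in conflict ...
    (InConflict R1 R2 ∧ InConflict R2 R3 ∧ InConflict R3 R4 ∧
      InConflict R4 R5 ∧ InConflict R5 R1) ∧
    -- ... but each such conflict is asymmetric: performing first the move of x
    -- into y and then the move of y (containing x) is still possible
    (Red R1 Q12 ∧ Red R2 Q23 ∧ Red R3 Q34 ∧ Red R4 Q45 ∧ Red R5 Q51) ∧
    -- all non-adjacent pairs are distributable
    (DistributableSteps A R1 R3 ∧ DistributableSteps A R2 R4 ∧
      DistributableSteps A R3 R5 ∧ DistributableSteps A R4 R1 ∧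
      DistributableSteps A R5 R2) := by
  have hab : a ≠ b := by simp_all
  have hac : a ≠ c := by simp_all
  have had : a ≠ d := by simp_all
  have hae : a ≠ e := by simp_all
  have hbc : b ≠ c := by simp_all
  have hbd : b ≠ d := by simp_all
  have hbe : b ≠ e := by simp_all
  have hcd : c ≠ d := by simp_all
  have hce : c ≠ e := by simp_all
  have hde : d ≠ e := by simp_all
  have hba := hab.symm; have hca := hac.symm; have hda := had.symm
  have hea := hae.symm; have hcb := hbc.symm; have hdb := hbd.symm
  have heb := hbe.symm; have hdc := hcd.symm; have hec := hce.symm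
  have hed := hde.symm
  open MAAux in
  refine ⟨⟨?_, ?_, ?_, ?_, ?_⟩,
    ⟨?_, ?_, ?_, ?_, ?_, ?_, ?_, ?_, ?_, ?_⟩,
    ⟨?_, ?_, ?_, ?_, ?_⟩, ⟨?_, ?_, ?_, ?_, ?_⟩, ⟨?_, ?_, ?_, ?_, ?_⟩⟩
  -- Red A R1 .. R5
  · exact Red.structCong
      (Q := .par (.par (CA a b) (CA b c)) (.par (CA c d) (.par (CA d e) (CA e a))))
      (sc_perm _ _ (List.Perm.refl _))
      (Red.parCtx (red_enter a b (.inn c .nil)))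
      (sc_perm _ _ (List.Perm.refl _))
  · exact Red.structCong
      (Q := .par (.par (CA b c) (CA c d)) (.par (CA a b) (.par (CA d e) (CA e a))))
      (sc_perm _ _ (perm_block [CA a b] [CA b c, CA c d] [CA d e, CA e a]))
      (Red.parCtx (red_enter b c (.inn d .nil)))
      (sc_perm _ _ (perm_block [B b c d] [CA a b] [CA d e, CA e a]))
  · exact Red.structCong
      (Q := .par (.par (CA c d) (CA d e)) (.par (CA a b) (.par (CA b c) (CA e a))))
      (sc_perm _ _ (perm_block [CA a b, CA b c] [CA c d, CA d e] [CA e a]))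
      (Red.parCtx (red_enter c d (.inn e .nil)))
      (sc_perm _ _ (perm_block [B c d e] [CA a b, CA b c] [CA e a]))
  · exact Red.structCong
      (Q := .par (.par (CA d e) (CA e a)) (.par (CA a b) (.par (CA b c) (CA c d))))
      (sc_perm _ _ (perm_block [CA a b, CA b c, CA c d] [CA d e, CA e a] []))
      (Red.parCtx (red_enter d e (.inn a .nil)))
      (sc_perm _ _ (perm_block [B d e a] [CA a b, CA b c, CA c d] []))
  · exact Red.structCong
      (Q := .par (.par (CA e a) (CA a b)) (.par (CA b c) (.par (CA c d) (CA d e))))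
      (sc_perm _ _ (perm_block [CA a b, CA b c, CA c d, CA d e] [CA e a] []))
      (Red.parCtx (red_enter e a (.inn b .nil)))
      (sc_perm _ _ (List.Perm.refl _))
  -- pairwise distinct
  · simp [hab, hba, hac, hca, had, hda, hae, hea, hbc, hcb, hbd, hdb, hbe, heb,
      hcd, hdc, hce, hec, hde, hed]
  · simp [hab, hba, hac, hca, had, hda, hae, hea, hbc, hcb, hbd, hdb, hbe, heb,
      hcd, hdc, hce, hec, hde, hed]
  · simp [hab, hba, hac, hca, had, hda, hae, hea, hbc, hcb, hbd, hdb, hbe, heb,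
      hcd, hdc, hce, hec, hde, hed]
  · simp [hab, hba, hac, hca, had, hda, hae, hea, hbc, hcb, hbd, hdb, hbe, heb,
      hcd, hdc, hce, hec, hde, hed]
  · simp [hab, hba, hac, hca, had, hda, hae, hea, hbc, hcb, hbd, hdb, hbe, heb,
      hcd, hdc, hce, hec, hde, hed]
  · simp [hab, hba, hac, hca, had, hda, hae, hea, hbc, hcb, hbd, hdb, hbe, heb,
      hcd, hdc, hce, hec, hde, hed]
  · simp [hab, hba, hac, hca, had, hda, hae, hea, hbc, hcb, hbd, hdb, hbe, heb,
      hcd, hdc, hce, hec, hde, hed]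
  · simp [hab, hba, hac, hca, had, hda, hae, hea, hbc, hcb, hbd, hdb, hbe, heb,
      hcd, hdc, hce, hec, hde, hed]
  · simp [hab, hba, hac, hca, had, hda, hae, hea, hbc, hcb, hbd, hdb, hbe, heb,
      hcd, hdc, hce, hec, hde, hed]
  · simp [hab, hba, hac, hca, had, hda, hae, hea, hbc, hcb, hbd, hdb, hbe, heb,
      hcd, hdc, hce, hec, hde, hed]
  -- conflicts
  · refine conflict_of b _ _ ?_ ?_ ?_ ?_ ?_ <;>
      simp [noOut, cntI, canIn, deep, htia, hta, tinn, hab, hba, hac, hca, had,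
        hda, hae, hea, hbc, hcb, hbd, hdb, hbe, heb, hcd, hdc, hce, hec, hde, hed]
  · refine conflict_of c _ _ ?_ ?_ ?_ ?_ ?_ <;>
      simp [noOut, cntI, canIn, deep, htia, hta, tinn, hab, hba, hac, hca, had,
        hda, hae, hea, hbc, hcb, hbd, hdb, hbe, heb, hcd, hdc, hce, hec, hde, hed]
  · refine conflict_of d _ _ ?_ ?_ ?_ ?_ ?_ <;>
      simp [noOut, cntI, canIn, deep, htia, hta, tinn, hab, hba, hac, hca, had,
        hda, hae, hea, hbc, hcb, hbd, hdb, hbe, heb, hcd, hdc, hce, hec, hde, hed]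
  · refine conflict_of e _ _ ?_ ?_ ?_ ?_ ?_ <;>
      simp [noOut, cntI, canIn, deep, htia, hta, tinn, hab, hba, hac, hca, had,
        hda, hae, hea, hbc, hcb, hbd, hdb, hbe, heb, hcd, hdc, hce, hec, hde, hed]
  · refine conflict_of a _ _ ?_ ?_ ?_ ?_ ?_ <;>
      simp [noOut, cntI, canIn, deep, htia, hta, tinn, hab, hba, hac, hca, had,
        hda, hae, hea, hbc, hcb, hbd, hdb, hbe, heb, hcd, hdc, hce, hec, hde, hed]
  -- asymmetry steps
  · exact Red.structCong
      (Q := .par (.par (B a b c) (CA c d)) (.par (CA d e) (CA e a)))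
      (sc_perm _ _ (List.Perm.refl _))
      (Red.parCtx (red_enter2 a b c (.inn d .nil)))
      (sc_perm _ _ (List.Perm.refl _))
  · exact Red.structCong
      (Q := .par (.par (B b c d) (CA d e)) (.par (CA a b) (CA e a)))
      (sc_perm _ _ (perm_block [CA a b] [B b c d, CA d e] [CA e a]))
      (Red.parCtx (red_enter2 b c d (.inn e .nil)))
      (sc_perm _ _ (perm_block [T b c d e] [CA a b] [CA e a]))
  · exact Red.structCong
      (Q := .par (.par (B c d e) (CA e a)) (.par (CA a b) (CA b c)))
      (sc_perm _ _ (perm_block [CA a b, CA b c] [B c d e, CA e a] []))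
      (Red.parCtx (red_enter2 c d e (.inn a .nil)))
      (sc_perm _ _ (perm_block [T c d e a] [CA a b, CA b c] []))
  · exact Red.structCong
      (Q := .par (.par (B d e a) (CA a b)) (.par (CA b c) (CA c d)))
      (sc_perm _ _ (perm_block [CA a b, CA b c, CA c d] [B d e a] []))
      (Red.parCtx (red_enter2 d e a (.inn b .nil)))
      (sc_perm _ _ (List.Perm.refl _))
  · exact Red.structCong
      (Q := .par (.par (B e a b) (CA b c)) (.par (CA c d) (CA d e)))
      (sc_perm _ _ (List.Perm.refl _))
      (Red.parCtx (red_enter2 e a b (.inn c .nil)))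
      (sc_perm _ _ (List.Perm.refl _))
  -- distributability
  · exact ⟨.par (CA a b) (CA b c), .par (CA c d) (.par (CA d e) (CA e a)),
      B a b c, .par (B c d e) (CA e a),
      sc_perm _ _ (List.Perm.refl _),
      red_enter a b (.inn c .nil),
      red_three c d (.inn e .nil) (CA e a),
      SC.refl _,
      sc_perm _ _ (List.Perm.refl _)⟩
  · exact ⟨.par (CA b c) (CA c d), .par (CA d e) (.par (CA e a) (CA a b)),
      B b c d, .par (B d e a) (CA a b),
      sc_perm _ _ (perm_block [CA a b] [CA b c, CA c d, CA d e, CA e a] []),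
      red_enter b c (.inn d .nil),
      red_three d e (.inn a .nil) (CA a b),
      sc_perm _ _ (perm_block [CA a b] [B b c d, CA d e, CA e a] []),
      sc_perm _ _ (perm_block [CA a b] [CA b c, CA c d, B d e a] [])⟩
  · exact ⟨.par (CA c d) (CA d e), .par (CA e a) (.par (CA a b) (CA b c)),
      B c d e, .par (B e a b) (CA b c),
      sc_perm _ _ (perm_block [CA a b, CA b c] [CA c d, CA d e, CA e a] []),
      red_enter c d (.inn e .nil),
      red_three e a (.inn b .nil) (CA b c),
      sc_perm _ _ (perm_block [CA a b, CA b c] [B c d e, CA e a] []),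
      sc_perm _ _ (perm_block [B e a b, CA b c] [CA c d, CA d e] [])⟩
  · exact ⟨.par (CA d e) (CA e a), .par (CA a b) (.par (CA b c) (CA c d)),
      B d e a, .par (B a b c) (CA c d),
      sc_perm _ _ (perm_block [CA a b, CA b c, CA c d] [CA d e, CA e a] []),
      red_enter d e (.inn a .nil),
      red_three a b (.inn c .nil) (CA c d),
      sc_perm _ _ (perm_block [CA a b, CA b c, CA c d] [B d e a] []),
      sc_perm _ _ (perm_block [B a b c, CA c d] [CA d e, CA e a] [])⟩
  · exact ⟨.par (CA e a) (CA a b), .par (CA b c) (.par (CA c d) (CA d e)),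
      B e a b, .par (B b c d) (CA d e),
      sc_perm _ _ (perm_block [CA a b, CA b c, CA c d, CA d e] [CA e a] []),
      red_enter e a (.inn b .nil),
      red_three b c (.inn d .nil) (CA d e),
      sc_perm _ _ (List.Perm.refl _),
      sc_perm _ _ (perm_block [CA a b, B b c d, CA d e] [CA e a] [])⟩
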